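/- arXiv:1903.06208 — 2 statements merged into one kernel-verified Lean document; each statement's English description precedes it below -/
import Mathlib

section
/- Let 0 < δ < 1 with 1/δ ∈ ℕ, z ∈ ℤ², ρ ∈ Γ, 1 < p < ∞, and let w be a weight on Q_z. Let E_{π₁} = {x_i : the selected side l_i is vertical}, with |E_{π₁}| = v, and relabel the corresponding cells and fattened sides as Q_z(1),…,Q_z(v) and ℓ_1,…,ℓ_v. Suppose there is a constant 0 < K < ∞ such that for every choice of nonnegative numbers b_1,…,b_v with Σ_{i=1}^v b_i^{p'} = 1, setting t_i = (b_i/|ℓ_i|)·(∫_{Q_z(i)} w dx)^{1/p}, one has ‖Σ_{i=1}^v t_i·1_{ℓ_i}‖_{L^{p'}(7Q_z, w^{1−p'})} ≤ K. Then ‖\tilde M_{ρ,δ} f‖_{L^p(Ψ^{−1}(E_{π₁}), w)} ≤ K·‖f‖_{L^p(7Q_z, w)} for all f, where Ψ^{−1}(E_{π₁}) is the union of the cells Q_z(i) with x_i ∈ E_{π₁}. -/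
open MeasureTheory Metric Set
open scoped ENNReal NNReal

noncomputable section

/-- Index of a `k`-face of an axis-parallel cube in `ℝⁿ`: a set of `k` "free" coordinates
together with a sign choice for the remaining coordinates (only the signs of coordinates
outside the free set matter). -/
abbrev FaceIdx (n k : ℕ) := {T : Finset (Fin n) // T.card = k} × (Fin n → Bool)

/-- The `k`-face of the axis-parallel cube centered at `x` with side length `2 r`
corresponding to the face index `F`. -/
def kFace {n : ℕ} (k : ℕ) (x : Fin n → ℝ) (r : ℝ) (F : FaceIdx n k) : Set (Fin n → ℝ) :=
  {y | (∀ i ∈ F.1.1, |y i - x i| ≤ r) ∧ ∀ i ∉ F.1.1, y i = x i + (if F.2 i then r else -r)}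

/-- The `δ`-neighborhood of a `k`-face. -/
def faceNbhd {n : ℕ} (k : ℕ) (δ : ℝ) (x : Fin n → ℝ) (r : ℝ) (F : FaceIdx n k) :
    Set (Fin n → ℝ) :=
  Metric.cthickening δ (kFace k x r F)

/-- The `δ`-neighborhood of the whole `k`-skeleton. -/
def skelNbhd {n : ℕ} (k : ℕ) (δ : ℝ) (x : Fin n → ℝ) (r : ℝ) : Set (Fin n → ℝ) :=
  ⋃ F : FaceIdx n k, faceNbhd k δ x r F

/-- The `k`-skeleton maximal function with width `δ` (with values in `ℝ≥0∞`):
`M^k_δ f (x) = sup_{1 ≤ r ≤ 2} min_j ⨍_{S^j_{k,δ}(x,r)} |f|`. -/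
def skelMax (n k : ℕ) (δ : ℝ) (f : (Fin n → ℝ) → ℝ) (x : Fin n → ℝ) : ℝ≥0∞ :=
  ⨆ r ∈ Set.Icc (1 : ℝ) 2, ⨅ F : FaceIdx n k,
    (volume (faceNbhd k δ x r F))⁻¹ * ∫⁻ y in faceNbhd k δ x r F, (‖f y‖₊ : ℝ≥0∞)

/-- `L^p` norm of an `ℝ≥0∞`-valued function. -/
def lpNormE {α : Type*} [MeasurableSpace α] (g : α → ℝ≥0∞) (p : ℝ) (μ : Measure α) : ℝ≥0∞ :=
  (∫⁻ x, g x ^ p ∂μ) ^ (1 / p)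

/-- The measure `w(x) dx` associated to a weight `w`. -/
def wMeasure {n : ℕ} (w : (Fin n → ℝ) → ℝ) : Measure (Fin n → ℝ) :=
  volume.withDensity fun x => ENNReal.ofReal (w x)

/-- Average of `g` over the set `A` (with respect to Lebesgue measure). -/
def ravg {n : ℕ} (A : Set (Fin n → ℝ)) (g : (Fin n → ℝ) → ℝ) : ℝ :=
  (volume A).toReal⁻¹ * ∫ y in A, g y

/-- The axis-parallel cube with center `c` and side length `s`. -/
def cube {n : ℕ} (c : Fin n → ℝ) (s : ℝ) : Set (Fin n → ℝ) :=
  {y | ∀ j, |y j - c j| ≤ s / 2}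

/-- The closed unit cube `Q_z` with lower-left vertex `z`. -/
def unitCube {n : ℕ} (z : Fin n → ℤ) : Set (Fin n → ℝ) :=
  {y | ∀ j, (z j : ℝ) ≤ y j ∧ y j ≤ (z j : ℝ) + 1}

/-- The cube `7 Q_z`: same center as `Q_z`, side length `7`. -/
def sevenCube {n : ℕ} (z : Fin n → ℤ) : Set (Fin n → ℝ) :=
  {y | ∀ j, |y j - ((z j : ℝ) + 1 / 2)| ≤ 7 / 2}

/-- The (half-open) grid cell `Q_z(m)` of side length `δ = 1/N` inside `Q_z`. -/
def gridCell {n : ℕ} (N : ℕ) (z : Fin n → ℤ) (m : Fin n → Fin N) : Set (Fin n → ℝ) :=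
  {y | ∀ j, (z j : ℝ) + (m j : ℝ) / N ≤ y j ∧ y j < (z j : ℝ) + ((m j : ℝ) + 1) / N}

/-- The center `x_m` of the grid cell `Q_z(m)`. -/
def gridCenter {n : ℕ} (N : ℕ) (z : Fin n → ℤ) (m : Fin n → Fin N) : Fin n → ℝ :=
  fun j => (z j : ℝ) + ((m j : ℝ) + 1 / 2) / N

/-- Membership in `Γ`: a radius function with values in `[1,2] ∩ δ ℤ`, `δ = 1/N`. -/
def inGamma {n : ℕ} (N : ℕ) (ρ : (Fin n → Fin N) → ℝ) : Prop :=
  ∀ m, ρ m ∈ Set.Icc (1 : ℝ) 2 ∧ ∃ t : ℤ, ρ m = (t : ℝ) / N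

/-- The `δ'`-neighborhood `ℓ_m` of the selected `k`-face of the skeleton
`S_k(x_m, ρ(x_m))`. -/
def selFace {n : ℕ} (k N : ℕ) (z : Fin n → ℤ) (ρ : (Fin n → Fin N) → ℝ)
    (sel : (Fin n → Fin N) → FaceIdx n k) (δ' : ℝ) (m : Fin n → Fin N) : Set (Fin n → ℝ) :=
  Metric.cthickening δ' (kFace k (gridCenter N z m) (ρ m) (sel m))

/-- The linearized `k`-skeleton maximal operator: on the cell `Q_z(m)` it equals the
average of `f` over the `δ'`-neighborhood of the selected face. -/
def linMax {n : ℕ} (k N : ℕ) (z : Fin n → ℤ) (ρ : (Fin n → Fin N) → ℝ)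
    (sel : (Fin n → Fin N) → FaceIdx n k) (δ' : ℝ) (f : (Fin n → ℝ) → ℝ)
    (x : Fin n → ℝ) : ℝ :=
  ∑ m : Fin n → Fin N, Set.indicator (gridCell N z m)
    (fun _ => (volume (selFace k N z ρ sel δ' m)).toReal⁻¹ *
      ∫ y in selFace k N z ρ sel δ' m, f y) x

/-- The local skeleton `A_p` constant `[w]_{A^{S_k}_{p,ρ,z}}` (for `1 < p < ∞`). -/
def ApLoc {n : ℕ} (k N : ℕ) (z : Fin n → ℤ) (ρ : (Fin n → Fin N) → ℝ)
    (sel : (Fin n → Fin N) → FaceIdx n k) (w : (Fin n → ℝ) → ℝ) (p : ℝ) : ℝ≥0∞ :=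
  ⨆ m : Fin n → Fin N,
    ((volume (selFace k N z ρ sel ((N : ℝ)⁻¹) m))⁻¹ *
        ∫⁻ y in gridCell N z m, ENNReal.ofReal (w y)) *
      ((volume (selFace k N z ρ sel ((N : ℝ)⁻¹) m))⁻¹ *
        ∫⁻ y in selFace k N z ρ sel ((N : ℝ)⁻¹) m,
          ENNReal.ofReal (w y) ^ (1 - p / (p - 1))) ^ (p - 1)

/-- The local skeleton `A_1` constant `[w]_{A^{S_k}_{1,ρ,z}}`. -/
def A1Loc {n : ℕ} (k N : ℕ) (z : Fin n → ℤ) (ρ : (Fin n → Fin N) → ℝ)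
    (sel : (Fin n → Fin N) → FaceIdx n k) (w : (Fin n → ℝ) → ℝ) : ℝ≥0∞ :=
  ⨆ m : Fin n → Fin N,
    ((volume (selFace k N z ρ sel ((N : ℝ)⁻¹) m))⁻¹ *
        ∫⁻ y in gridCell N z m, ENNReal.ofReal (w y)) *
      essSup (fun y => (ENNReal.ofReal (w y))⁻¹)
        (volume.restrict (selFace k N z ρ sel ((N : ℝ)⁻¹) m))

/-- The global skeleton `A_p` constant `[w]_{A^{S_k}_p}` (with the `A_1` version at `p = 1`). -/
def ApGlobal {n : ℕ} (k N : ℕ)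
    (sel : (Fin n → ℤ) → ((Fin n → Fin N) → ℝ) → (Fin n → Fin N) → FaceIdx n k)
    (w : (Fin n → ℝ) → ℝ) (p : ℝ) : ℝ≥0∞ :=
  if p = 1 then
    ⨆ z : Fin n → ℤ, ⨆ ρ : {ρ : (Fin n → Fin N) → ℝ // inGamma N ρ},
      A1Loc k N z ρ.1 (sel z ρ.1) w
  else
    ⨆ z : Fin n → ℤ, ⨆ ρ : {ρ : (Fin n → Fin N) → ℝ // inGamma N ρ},
      ApLoc k N z ρ.1 (sel z ρ.1) w p

/-!
Since `\tilde M f` is constant on each cell, the left-hand side is the `ℓ^p` norm of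
`(w(Q_i)^{1/p} |⨍_{ℓ_i} f|)_i`, and by `ℓ^p`–`ℓ^{p'}` duality this norm is attained against a
nonnegative `b` with `∑ b_i^{p'} = 1`. Since every `ℓ_i` lies in
`7Q_z`, the pairing `∑ b_i w(Q_i)^{1/p} |⨍_{ℓ_i} f|` is at most `∫_{7Q_z} g_b |f|` with
`g_b = ∑ t_i 1_{ℓ_i}`, and Hölder's inequality for `|f| w^{1/p}` and `g_b w^{-1/p}` bounds this by
`‖f‖_{L^p(w)} ‖g_b‖_{L^{p'}(w^{1-p'})} ≤ K ‖f‖_{L^p(w)}`.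
-/

open Function

theorem ofReal_Lp_le_of_forall_sum_mul_le {ι : Type*} (t : Finset ι) {c : ι → ℝ} (hc : ∀ i, 0 ≤ c i)
    {p q : ℝ} (hpq : p.HolderConjugate q) {B : ℝ≥0∞}
    (h : ∀ b : ι → ℝ, (∀ i, 0 ≤ b i) → ∑ i ∈ t, b i ^ q = 1 →
      ENNReal.ofReal (∑ i ∈ t, b i * c i) ≤ B) :
    ENNReal.ofReal ((∑ i ∈ t, c i ^ p) ^ (1 / p)) ≤ B := by
  set S := ∑ i ∈ t, c i ^ p
  obtain hS | hS := (Finset.sum_nonneg fun i _ => Real.rpow_nonneg (hc i) p : 0 ≤ S).eq_or_lt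
  · rw [show S = 0 from hS.symm, Real.zero_rpow hpq.one_div_ne_zero, ENNReal.ofReal_zero]
    exact zero_le
  -- the extremal sequence `b = c ^ (p - 1) / ‖c‖_p ^ (p - 1)`, normalised in `ℓ^q`
  set T := S ^ (1 / q)
  have hT : 0 < T := Real.rpow_pos_of_pos hS _
  have hTq : T ^ q = S := by
    rw [← Real.rpow_mul hS.le, one_div_mul_cancel hpq.symm.ne_zero, Real.rpow_one]
  have hcp : ∀ i, c i ^ (p - 1) * c i = c i ^ p := fun i => by
    rw [← Real.rpow_add_one' (hc i) (by simpa using hpq.ne_zero), sub_add_cancel]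
  refine le_of_eq_of_le ?_ (h (fun i => c i ^ (p - 1) / T)
    (fun i => div_nonneg (Real.rpow_nonneg (hc i) _) hT.le) ?_)
  · congr 1
    simp_rw [div_mul_eq_mul_div, hcp, ← Finset.sum_div]
    rw [one_div, ← hpq.symm.one_sub_inv, Real.rpow_sub hS, Real.rpow_one, ← one_div]
  · calc ∑ i ∈ t, (c i ^ (p - 1) / T) ^ q = ∑ i ∈ t, c i ^ p / S := by
          refine Finset.sum_congr rfl fun i _ => ?_
          rw [Real.div_rpow (Real.rpow_nonneg (hc i) _) hT.le, ← Real.rpow_mul (hc i),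
            hpq.sub_one_mul_conj, hTq]
      _ = 1 := by rw [← Finset.sum_div, div_self hS.ne']

section WeightedHolder

variable {α E F : Type*} [MeasurableSpace α] [NormedAddCommGroup E] [NormedAddCommGroup F]
  {μ : Measure α}

theorem eLpNorm_withDensity_eq_lintegral {W : α → ℝ≥0∞} (hW : AEMeasurable W μ) {f : α → E}
    (hf : AEStronglyMeasurable f μ) {p : ℝ} (hp : 0 < p) :
    eLpNorm f (ENNReal.ofReal p) (μ.withDensity W) = (∫⁻ x, W x * ‖f x‖ₑ ^ p ∂μ) ^ (1 / p) := by
  rw [eLpNorm_eq_lintegral_rpow_enorm_toReal (by simpa using hp) ENNReal.ofReal_ne_top,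
    ENNReal.toReal_ofReal hp.le,
    lintegral_withDensity_eq_lintegral_mul₀ hW (hf.enorm.pow_const p)]
  rfl

theorem lintegral_enorm_mul_le_eLpNorm_withDensity_mul {p q : ℝ} (hpq : p.HolderConjugate q)
    {W : α → ℝ≥0∞} (hW : AEMeasurable W μ) (hW_top : ∀ x, W x ≠ ⊤) {f : α → E} {g : α → F}
    (hf : AEStronglyMeasurable f μ) (hg : AEStronglyMeasurable g μ)
    (hg_fin : eLpNorm g (ENNReal.ofReal q) (μ.withDensity fun x => W x ^ (1 - q)) ≠ ⊤) :
    ∫⁻ x, ‖g x‖ₑ * ‖f x‖ₑ ∂μ ≤ eLpNorm f (ENNReal.ofReal p) (μ.withDensity W) *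
      eLpNorm g (ENNReal.ofReal q) (μ.withDensity fun x => W x ^ (1 - q)) := by
  have hp := hpq.pos
  have hq := hpq.symm.pos
  rw [eLpNorm_withDensity_eq_lintegral (hW.pow_const _) hg hq] at hg_fin ⊢
  rw [eLpNorm_withDensity_eq_lintegral hW hf hp]
  have hg_int : ∫⁻ x, W x ^ (1 - q) * ‖g x‖ₑ ^ q ∂μ ≠ ⊤ := by
    simpa [ENNReal.rpow_eq_top_iff, hq, hq.le, not_lt_of_ge] using hg_fin
  -- `g` vanishes almost everywhere on `{W = 0}`, where the dual weight is `⊤`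
  have hg_zero : ∀ᵐ x ∂μ, W x = 0 → g x = 0 := by
    filter_upwards [ae_lt_top' ((hW.pow_const _).mul (hg.enorm.pow_const _)) hg_int] with x hx hWx
    by_contra hgx
    rw [Pi.mul_apply, hWx, ENNReal.zero_rpow_of_neg (by linarith [hpq.symm.lt]),
      ENNReal.top_mul] at hx
    · exact lt_irrefl _ hx
    · simpa [hq] using hgx
  have hexp : -(1 / p) * q = 1 - q := by
    have := hpq.mul_eq_add
    field_simp
    linarith
  calc ∫⁻ x, ‖g x‖ₑ * ‖f x‖ₑ ∂μ
      ≤ ∫⁻ x, (‖f x‖ₑ * W x ^ (1 / p)) * (‖g x‖ₑ * W x ^ (-(1 / p))) ∂μ := by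
        refine lintegral_mono_ae ?_
        filter_upwards [hg_zero] with x hx
        rcases eq_or_ne (W x) 0 with hWx | hWx
        · simp [hx hWx]
        · rw [mul_mul_mul_comm, ← ENNReal.rpow_add _ _ hWx (hW_top x), add_neg_cancel,
            ENNReal.rpow_zero, mul_one, mul_comm]
    _ ≤ (∫⁻ x, (‖f x‖ₑ * W x ^ (1 / p)) ^ p ∂μ) ^ (1 / p) *
        (∫⁻ x, (‖g x‖ₑ * W x ^ (-(1 / p))) ^ q ∂μ) ^ (1 / q) :=
        ENNReal.lintegral_mul_le_Lp_mul_Lq μ hpq (hf.enorm.mul (hW.pow_const _))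
          (hg.enorm.mul (hW.pow_const _))
    _ = _ := by
        congr 3 <;> ext x
        · rw [ENNReal.mul_rpow_of_nonneg _ _ hp.le, ← ENNReal.rpow_mul, one_div_mul_cancel hp.ne',
            ENNReal.rpow_one, mul_comm]
        · rw [ENNReal.mul_rpow_of_nonneg _ _ hq.le, ← ENNReal.rpow_mul, hexp, mul_comm]

end WeightedHolder

section Averages

variable {ι α E : Type*} [MeasurableSpace α] [NormedAddCommGroup E] {μ : Measure α}

/-- `f` need not be measurable; `F` is `f` on the union of those `s i` on which `f` is
integrable, and `0` elsewhere. -/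
theorem exists_integrable_enorm_setIntegral_le [NormedSpace ℝ E] (t : Finset ι) {s : ι → Set α}
    (hs : ∀ i, MeasurableSet (s i)) (f : α → E) :
    ∃ F : α → E, Integrable F μ ∧ (∀ x, ‖F x‖ ≤ ‖f x‖) ∧
      ∀ i ∈ t, ‖∫ x in s i, f x ∂μ‖ₑ ≤ ∫⁻ x in s i, ‖F x‖ₑ ∂μ := by
  classical
  set t' := t.filter fun i => IntegrableOn f (s i) μ
  set U := ⋃ i ∈ t', s i
  refine ⟨U.indicator f, ?_, fun x => norm_indicator_le_norm_self f x, fun i hi => ?_⟩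
  · refine IntegrableOn.integrable_indicator ?_ (t'.measurableSet_biUnion fun i _ => hs i)
    exact integrableOn_finset_iUnion.2 fun i hi => (Finset.mem_filter.1 hi).2
  by_cases hfi : IntegrableOn f (s i) μ
  · have hU : s i ⊆ U := Set.subset_biUnion_of_mem (Finset.mem_filter.2 ⟨hi, hfi⟩)
    refine (enorm_integral_le_lintegral_enorm _).trans_eq (setLIntegral_congr_fun (hs i) ?_)
    intro x hx
    simp only [Set.indicator_of_mem (hU hx)]
  · rw [integral_undef hfi, enorm_zero]
    exact zero_le

theorem sum_ofReal_mul_setLIntegral_eq (t : Finset ι) {s : Set α} {ℓ : ι → Set α}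
    (hℓ : ∀ i, MeasurableSet (ℓ i)) (hℓs : ∀ i, ℓ i ⊆ s) {γ : ι → ℝ} (hγ : ∀ i, 0 ≤ γ i)
    {F : α → E} (hF : AEStronglyMeasurable F μ) :
    ∑ i ∈ t, ENNReal.ofReal (γ i) * ∫⁻ x in ℓ i, ‖F x‖ₑ ∂μ =
      ∫⁻ x in s, ‖∑ i ∈ t, γ i * (ℓ i).indicator (fun _ => (1 : ℝ)) x‖ₑ * ‖F x‖ₑ ∂μ := by
  have hterm : ∀ i x, 0 ≤ γ i * (ℓ i).indicator (fun _ => (1 : ℝ)) x := fun i x =>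
    mul_nonneg (hγ i) (Set.indicator_nonneg (fun _ _ => zero_le_one) x)
  calc ∑ i ∈ t, ENNReal.ofReal (γ i) * ∫⁻ x in ℓ i, ‖F x‖ₑ ∂μ
      = ∑ i ∈ t, ∫⁻ x in s, ENNReal.ofReal (γ i * (ℓ i).indicator (fun _ => (1 : ℝ)) x) *
          ‖F x‖ₑ ∂μ := by
        refine Finset.sum_congr rfl fun i _ => ?_
        calc ENNReal.ofReal (γ i) * ∫⁻ x in ℓ i, ‖F x‖ₑ ∂μ
            = ∫⁻ x in s, (ℓ i).indicator (fun x => ENNReal.ofReal (γ i) * ‖F x‖ₑ) x ∂μ := by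
              rw [lintegral_indicator (hℓ i), Measure.restrict_restrict (hℓ i),
                Set.inter_eq_self_of_subset_left (hℓs i),
                lintegral_const_mul' _ _ ENNReal.ofReal_ne_top]
          _ = _ := lintegral_congr fun x => by by_cases hx : x ∈ ℓ i <;> simp [hx]
    _ = ∫⁻ x in s, ‖∑ i ∈ t, γ i * (ℓ i).indicator (fun _ => (1 : ℝ)) x‖ₑ * ‖F x‖ₑ ∂μ := by
        rw [← lintegral_finsetSum' _ fun i _ => ?_]
        · refine lintegral_congr fun x => ?_
          rw [← Finset.sum_mul, Real.enorm_eq_ofReal (Finset.sum_nonneg fun i _ => hterm i x),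
            ENNReal.ofReal_sum_of_nonneg fun i _ => hterm i x]
        · exact (((measurable_const.indicator (hℓ i)).const_mul (γ i)).ennreal_ofReal
            |>.aemeasurable.mul hF.restrict.enorm)

theorem rpow_sum_enorm_setAverage_le_of_dual_bound {p q : ℝ} (hpq : p.HolderConjugate q)
    (t : Finset ι) {s : Set α} (hs : MeasurableSet s) {ℓ : ι → Set α}
    (hℓ : ∀ i, MeasurableSet (ℓ i)) (hℓs : ∀ i, ℓ i ⊆ s) {W : α → ℝ≥0∞} (hW : AEMeasurable W μ)
    (hW_top : ∀ x, W x ≠ ⊤) {u : ι → ℝ} (hu : ∀ i, 0 ≤ u i) {K : ℝ≥0∞} (hK : K ≠ ⊤)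
    (hdual : ∀ b : ι → ℝ, (∀ i, 0 ≤ b i) → ∑ i ∈ t, b i ^ q = 1 →
      eLpNorm (fun x => ∑ i ∈ t, b i / (μ (ℓ i)).toReal * u i ^ (1 / p) *
          (ℓ i).indicator (fun _ => (1 : ℝ)) x)
        (ENNReal.ofReal q) ((μ.withDensity fun x => W x ^ (1 - q)).restrict s) ≤ K)
    (f : α → ℝ) :
    (∑ i ∈ t, ‖(μ (ℓ i)).toReal⁻¹ * ∫ x in ℓ i, f x ∂μ‖ₑ ^ p * ENNReal.ofReal (u i)) ^ (1 / p) ≤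
      K * eLpNorm f (ENNReal.ofReal p) ((μ.withDensity W).restrict s) := by
  have hp := hpq.pos
  set A : ι → ℝ := fun i => (μ (ℓ i)).toReal⁻¹ * ∫ x in ℓ i, f x ∂μ
  set c : ι → ℝ := fun i => ‖A i‖ * u i ^ (1 / p)
  have hc : ∀ i, 0 ≤ c i := fun i => mul_nonneg (norm_nonneg _) (Real.rpow_nonneg (hu i) _)
  have hcp : ∀ i, ‖A i‖ₑ ^ p * ENNReal.ofReal (u i) = ENNReal.ofReal (c i ^ p) := fun i => by
    rw [Real.mul_rpow (norm_nonneg _) (Real.rpow_nonneg (hu i) _), ← Real.rpow_mul (hu i),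
      one_div_mul_cancel hp.ne', Real.rpow_one,
      ENNReal.ofReal_mul (Real.rpow_nonneg (norm_nonneg _) _),
      ← ENNReal.ofReal_rpow_of_nonneg (norm_nonneg _) hp.le, ofReal_norm]
  rw [Finset.sum_congr rfl fun i _ => hcp i,
    ← ENNReal.ofReal_sum_of_nonneg fun i _ => Real.rpow_nonneg (hc i) p,
    ENNReal.ofReal_rpow_of_nonneg (Finset.sum_nonneg fun i _ => Real.rpow_nonneg (hc i) p)
      (one_div_nonneg.2 hp.le), restrict_withDensity hs]
  refine ofReal_Lp_le_of_forall_sum_mul_le t hc hpq fun b hb hbq => ?_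
  obtain ⟨F, hF_int, hF_le, hF⟩ := exists_integrable_enorm_setIntegral_le (μ := μ) t hℓ f
  set γ : ι → ℝ := fun i => b i / (μ (ℓ i)).toReal * u i ^ (1 / p)
  have hγ : ∀ i, 0 ≤ γ i := fun i =>
    mul_nonneg (div_nonneg (hb i) ENNReal.toReal_nonneg) (Real.rpow_nonneg (hu i) _)
  set g : α → ℝ := fun x => ∑ i ∈ t, γ i * (ℓ i).indicator (fun _ => (1 : ℝ)) x
  have hg_meas : Measurable g :=
    Finset.measurable_sum _ fun i _ => (measurable_const.indicator (hℓ i)).const_mul _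
  have hg : eLpNorm g (ENNReal.ofReal q) ((μ.restrict s).withDensity fun x => W x ^ (1 - q)) ≤ K :=
    restrict_withDensity hs _ ▸ hdual b hb hbq
  calc ENNReal.ofReal (∑ i ∈ t, b i * c i)
      = ∑ i ∈ t, ENNReal.ofReal (γ i) * ‖∫ x in ℓ i, f x ∂μ‖ₑ := by
        rw [ENNReal.ofReal_sum_of_nonneg fun i _ => mul_nonneg (hb i) (hc i)]
        refine Finset.sum_congr rfl fun i _ => ?_
        rw [← ofReal_norm, ← ENNReal.ofReal_mul (hγ i)]
        congr 1
        simp only [c, A, γ, norm_mul, norm_inv, Real.norm_of_nonneg ENNReal.toReal_nonneg]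
        ring
    _ ≤ ∑ i ∈ t, ENNReal.ofReal (γ i) * ∫⁻ x in ℓ i, ‖F x‖ₑ ∂μ := by
        gcongr with i hi
        exact hF i hi
    _ = ∫⁻ x in s, ‖g x‖ₑ * ‖F x‖ₑ ∂μ :=
        sum_ofReal_mul_setLIntegral_eq t hℓ hℓs hγ hF_int.aestronglyMeasurable
    _ ≤ eLpNorm F (ENNReal.ofReal p) ((μ.restrict s).withDensity W) *
          eLpNorm g (ENNReal.ofReal q) ((μ.restrict s).withDensity fun x => W x ^ (1 - q)) :=
        lintegral_enorm_mul_le_eLpNorm_withDensity_mul hpq hW.restrict hW_top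
          hF_int.aestronglyMeasurable.restrict hg_meas.aestronglyMeasurable
          (ne_top_of_le_ne_top hK hg)
    _ ≤ eLpNorm f (ENNReal.ofReal p) ((μ.restrict s).withDensity W) * K :=
        mul_le_mul' (eLpNorm_mono hF_le) hg
    _ = _ := mul_comm _ _

end Averages

theorem eLpNorm_restrict_biUnion_of_eqOn_const {ι α E : Type*} [MeasurableSpace α]
    [NormedAddCommGroup E] {μ : Measure α} {p : ℝ} (hp : 0 < p) (t : Finset ι)
    {s : ι → Set α} (hs : ∀ i, MeasurableSet (s i)) (hd : Pairwise (Disjoint on s))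
    {f : α → E} {a : ι → E} (hf : ∀ i ∈ t, EqOn f (fun _ => a i) (s i)) :
    eLpNorm f (ENNReal.ofReal p) (μ.restrict (⋃ i ∈ t, s i)) =
      (∑ i ∈ t, ‖a i‖ₑ ^ p * μ (s i)) ^ (1 / p) := by
  rw [eLpNorm_eq_lintegral_rpow_enorm_toReal (by simpa using hp) ENNReal.ofReal_ne_top,
    ENNReal.toReal_ofReal hp.le, lintegral_biUnion_finset (hd.set_pairwise _) fun i _ => hs i]
  congr 1
  refine Finset.sum_congr rfl fun i hi => ?_
  rw [setLIntegral_congr_fun (hs i) fun x hx => by rw [hf i hi hx], setLIntegral_const]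

section Grid

variable {n : ℕ} {N : ℕ} (z : Fin n → ℤ)

theorem measurableSet_gridCell (m : Fin n → Fin N) : MeasurableSet (gridCell N z m) := by
  simp only [gridCell, ofPred_forall, ofPred_and]
  exact MeasurableSet.iInter fun j =>
    (measurableSet_le measurable_const (measurable_pi_apply j)).inter
      (measurableSet_lt (measurable_pi_apply j) measurable_const)

theorem pairwise_disjoint_gridCell : Pairwise (Disjoint on gridCell N z) := by
  intro m m' hmm'
  obtain ⟨j, hj⟩ := Function.ne_iff.mp hmm'
  refine Set.disjoint_left.2 fun y hy hy' => ?_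
  have hy := hy j
  have hy' := hy' j
  rcases lt_or_gt_of_ne hj with hlt | hlt
  · have : ((m j : ℝ) + 1) / N ≤ (m' j : ℝ) / N := by gcongr; exact_mod_cast hlt
    linarith
  · have : ((m' j : ℝ) + 1) / N ≤ (m j : ℝ) / N := by gcongr; exact_mod_cast hlt
    linarith

theorem gridCell_subset_Icc (m : Fin n → Fin N) :
    gridCell N z m ⊆ Icc (fun j => (z j : ℝ)) (fun j => (z j : ℝ) + 1) := by
  intro y hy
  refine ⟨fun j => ?_, fun j => ?_⟩
  · have := (hy j).1
    have : (0 : ℝ) ≤ (m j : ℝ) / N := by positivity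
    dsimp only
    linarith
  · have := (hy j).2
    have : ((m j : ℝ) + 1) / N ≤ 1 := div_le_one_of_le₀ (by exact_mod_cast (m j).2) (by positivity)
    dsimp only
    linarith

theorem linMax_eq_of_mem_gridCell {k : ℕ} (ρ : (Fin n → Fin N) → ℝ)
    (sel : (Fin n → Fin N) → FaceIdx n k) (δ' : ℝ) (f : (Fin n → ℝ) → ℝ) {m : Fin n → Fin N}
    {x : Fin n → ℝ} (hx : x ∈ gridCell N z m) :
    linMax k N z ρ sel δ' f x =
      (volume (selFace k N z ρ sel δ' m)).toReal⁻¹ * ∫ y in selFace k N z ρ sel δ' m, f y := by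
  rw [linMax, Finset.sum_eq_single_of_mem m (Finset.mem_univ m) fun m' _ hm' =>
    Set.indicator_of_notMem (Set.disjoint_right.1 (pairwise_disjoint_gridCell z hm') hx) _,
    Set.indicator_of_mem hx]

theorem sevenCube_eq_closedBall :
    sevenCube z = closedBall (fun j => (z j : ℝ) + 1 / 2) (7 / 2) := by
  ext y
  rw [mem_closedBall, dist_pi_le_iff (by norm_num)]
  simp only [sevenCube, mem_ofPred_eq, Real.dist_eq]

theorem kFace_subset_closedBall {k : ℕ} (x : Fin n → ℝ) {r : ℝ} (hr : 0 ≤ r) (F : FaceIdx n k) :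
    kFace k x r F ⊆ closedBall x r := by
  intro y hy
  rw [mem_closedBall, dist_pi_le_iff hr]
  intro j
  rw [Real.dist_eq]
  by_cases hj : j ∈ F.1.1
  · exact hy.1 j hj
  · rw [hy.2 j hj]
    split_ifs <;> simp [abs_of_nonneg hr]

theorem dist_gridCenter_le (m : Fin n → Fin N) :
    dist (gridCenter N z m) (fun j => (z j : ℝ) + 1 / 2) ≤ 1 / 2 := by
  refine (dist_pi_le_iff (by norm_num)).2 fun j => ?_
  have hN : (0 : ℝ) < N := by exact_mod_cast Fin.pos (m j)
  have h₀ : (0 : ℝ) ≤ ((m j : ℝ) + 1 / 2) / N := by positivity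
  have h₁ : ((m j : ℝ) + 1 / 2) / N ≤ 1 := by
    rw [div_le_one hN]
    linarith [show ((m j : ℕ) : ℝ) + 1 ≤ N by exact_mod_cast (m j).2]
  rw [Real.dist_eq, gridCenter, abs_le]
  constructor <;> linarith

theorem selFace_subset_sevenCube {k : ℕ} {ρ : (Fin n → Fin N) → ℝ} (hρ : inGamma N ρ)
    (sel : (Fin n → Fin N) → FaceIdx n k) {δ' : ℝ} (hδ₀ : 0 ≤ δ') (hδ₁ : δ' ≤ 1)
    (m : Fin n → Fin N) : selFace k N z ρ sel δ' m ⊆ sevenCube z := by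
  have hρ₀ : 0 ≤ ρ m := zero_le_one.trans (hρ m).1.1
  rw [sevenCube_eq_closedBall]
  calc selFace k N z ρ sel δ' m
      ⊆ cthickening δ' (closedBall (gridCenter N z m) (ρ m)) :=
        cthickening_subset_of_subset _ (kFace_subset_closedBall _ hρ₀ _)
    _ = closedBall (gridCenter N z m) (δ' + ρ m) := cthickening_closedBall hδ₀ hρ₀ _
    _ ⊆ closedBall (fun j => (z j : ℝ) + 1 / 2) (7 / 2) := by
        refine closedBall_subset_closedBall' ?_
        linarith [dist_gridCenter_le z m, (hρ m).1.2]

end Grid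

theorem dual_to_maximal_general (N : ℕ) (δ : ℝ) (hδ : δ = (N : ℝ)⁻¹)
    (z : Fin 2 → ℤ) (ρ : (Fin 2 → Fin N) → ℝ) (hρ : inGamma N ρ)
    (sel : (Fin 2 → Fin N) → FaceIdx 2 1) (p : ℝ) (hp : 1 < p)
    (w : (Fin 2 → ℝ) → ℝ) (hw0 : ∀ x, 0 ≤ w x) (hw : LocallyIntegrable w volume)
    (K : ℝ)
    (hdual : ∀ b : (Fin 2 → Fin N) → ℝ, (∀ m, 0 ≤ b m) →
      (∑ m ∈ Finset.univ.filter (fun m => (sel m).1.1 = ({1} : Finset (Fin 2))),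
          b m ^ (p / (p - 1)) = 1) →
      eLpNorm
        (fun y => ∑ m ∈ Finset.univ.filter (fun m => (sel m).1.1 = ({1} : Finset (Fin 2))),
          b m / (volume (selFace 1 N z ρ sel δ m)).toReal *
            (∫ x in gridCell N z m, w x) ^ (1 / p) *
            Set.indicator (selFace 1 N z ρ sel δ m) (fun _ => (1 : ℝ)) y)
        (ENNReal.ofReal (p / (p - 1)))
        ((volume.withDensity fun y => ENNReal.ofReal (w y) ^ (1 - p / (p - 1))).restrict
          (sevenCube z)) ≤ ENNReal.ofReal K) :
    ∀ f : (Fin 2 → ℝ) → ℝ,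
      eLpNorm (linMax 1 N z ρ sel δ f) (ENNReal.ofReal p)
          ((wMeasure w).restrict
            (⋃ m ∈ Finset.univ.filter (fun m => (sel m).1.1 = ({1} : Finset (Fin 2))),
              gridCell N z m)) ≤
        ENNReal.ofReal K *
          eLpNorm f (ENNReal.ofReal p) ((wMeasure w).restrict (sevenCube z)) := by
  intro f
  have hδ₀ : 0 ≤ δ := hδ ▸ inv_nonneg.2 (Nat.cast_nonneg N)
  have hδ₁ : δ ≤ 1 := hδ ▸ Nat.cast_inv_le_one N
  have hw_cell : ∀ m, wMeasure w (gridCell N z m) = ENNReal.ofReal (∫ x in gridCell N z m, w x) :=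
    fun m => by
      rw [wMeasure, withDensity_apply _ (measurableSet_gridCell z m),
        ofReal_integral_eq_lintegral_ofReal
          ((hw.integrableOn_isCompact isCompact_Icc).mono_set (gridCell_subset_Icc z m))
          (ae_of_all _ hw0)]
  rw [eLpNorm_restrict_biUnion_of_eqOn_const (by linarith) _ (measurableSet_gridCell z)
    (pairwise_disjoint_gridCell z) fun m _ x hx => linMax_eq_of_mem_gridCell z ρ sel δ f hx]
  simp_rw [hw_cell]
  exact rpow_sum_enorm_setAverage_le_of_dual_bound (Real.HolderConjugate.conjExponent hp) _
    (sevenCube_eq_closedBall z ▸ measurableSet_closedBall)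
    (fun m => isClosed_cthickening.measurableSet) (selFace_subset_sevenCube z hρ sel hδ₀ hδ₁)
    hw.aestronglyMeasurable.aemeasurable.ennreal_ofReal (fun _ => ENNReal.ofReal_ne_top)
    (fun m => integral_nonneg hw0) ENNReal.ofReal_ne_top hdual f

/-- from an `L^{p'}(7Q_z, w^{1-p'})` bound for all admissible sums of
indicators of the selected vertical fattened sides, one obtains the `L^p(w)` bound for the
linearized skeleton maximal operator on `Ψ⁻¹(E_{π₁})`. -/
theorem dual_to_maximal (N : ℕ) (hN : 1 < N) (δ : ℝ) (hδ : δ = (N : ℝ)⁻¹)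
    (z : Fin 2 → ℤ) (ρ : (Fin 2 → Fin N) → ℝ) (hρ : inGamma N ρ)
    (sel : (Fin 2 → Fin N) → FaceIdx 2 1) (p : ℝ) (hp : 1 < p)
    (w : (Fin 2 → ℝ) → ℝ) (hw0 : ∀ x, 0 ≤ w x) (hw : LocallyIntegrable w volume)
    (K : ℝ) (hK : 0 < K)
    (hdual : ∀ b : (Fin 2 → Fin N) → ℝ, (∀ m, 0 ≤ b m) →
      (∑ m ∈ Finset.univ.filter (fun m => (sel m).1.1 = ({1} : Finset (Fin 2))),
          b m ^ (p / (p - 1)) = 1) →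
      eLpNorm
        (fun y => ∑ m ∈ Finset.univ.filter (fun m => (sel m).1.1 = ({1} : Finset (Fin 2))),
          b m / (volume (selFace 1 N z ρ sel δ m)).toReal *
            (∫ x in gridCell N z m, w x) ^ (1 / p) *
            Set.indicator (selFace 1 N z ρ sel δ m) (fun _ => (1 : ℝ)) y)
        (ENNReal.ofReal (p / (p - 1)))
        ((volume.withDensity fun y => ENNReal.ofReal (w y) ^ (1 - p / (p - 1))).restrict
          (sevenCube z)) ≤ ENNReal.ofReal K) :
    ∀ f : (Fin 2 → ℝ) → ℝ,
      eLpNorm (linMax 1 N z ρ sel δ f) (ENNReal.ofReal p)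
          ((wMeasure w).restrict
            (⋃ m ∈ Finset.univ.filter (fun m => (sel m).1.1 = ({1} : Finset (Fin 2))),
              gridCell N z m)) ≤
        ENNReal.ofReal K *
          eLpNorm f (ENNReal.ofReal p) ((wMeasure w).restrict (sevenCube z)) :=
  dual_to_maximal_general N δ hδ z ρ hρ sel p hp w hw0 hw K hdual
end
end

section
/- Fix integers 0 ≤ k < n. Let w be a weight on ℝⁿ, let 1 < p < ∞ and let δ ∈ (0,1). Suppose the k-skeleton maximal operator M^k_{4δ} is bounded on L^p(w), i.e. there is a constant C with ‖M^k_{4δ} f‖_{L^p(w)} ≤ C‖f‖_{L^p(w)} for all f ∈ L^p(w). Then w belongs to the class 𝒜^{S_k}_p at scale δ: the supremum over all x ∈ ℝⁿ and r ∈ [1,2] of (|S_{k,δ}(x,r)|^{−1} ∫_{Q_δ(x)} w dx)·(⨍_{ℓ_{k,δ}(x,r)} w^{−p'/p} dx)^p·(⨍_{S_{k,δ}(x,r)} w^{−p'/p} dx)^{−1} is finite. -/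
open MeasureTheory Metric Set
open scoped ENNReal NNReal

noncomputable section

/-!
Test the bound on `f = 1_S σ`, where `S = S_{k,δ}(x,r)` and `σ = w ^ (-p'/p)`. Since
`w σ ^ p = σ`, we get `‖f‖_{L^p(w)} ^ p = ∫_S σ`. For `z ∈ Q_δ(x)` the `δ`-neighborhood of each
face of the cube around `x` lies inside the `4δ`-neighborhood of the same face of the cube around
`z`, and the larger one has at most `4 ^ n` times the volume. Hence
`M^k_{4δ} f (z) ≥ 4 ^ (-n) min_j ⨍_{S^j_{k,δ}(x,r)} σ` on `Q_δ(x)`. Integrating `(M^k_{4δ} f) ^ p`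
over `Q_δ(x)` against `w` then gives `(min_j ⨍ σ) ^ p w(Q_δ(x)) ≤ (4 ^ n C) ^ p ∫_S σ`, and this
is the `𝒜^{S_k}_p` bound with constant `(4 ^ n C) ^ p`.
-/

theorem cthickening_univ_pi {ι : Type*} [Fintype ι] {X : ι → Type*}
    [∀ i, PseudoMetricSpace (X i)] [∀ i, ProperSpace (X i)] {δ : ℝ} (hδ : 0 ≤ δ)
    {S : ∀ i, Set (X i)} (hS : ∀ i, IsClosed (S i)) :
    cthickening δ (univ.pi S) = univ.pi fun i => cthickening δ (S i) := by
  ext y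
  simp only [(isClosed_set_pi fun i _ => hS i).cthickening_eq_biUnion_closedBall hδ,
    (hS _).cthickening_eq_biUnion_closedBall hδ, mem_iUnion₂, mem_closedBall, mem_univ_pi,
    dist_pi_le_iff hδ, exists_prop]
  constructor
  · rintro ⟨z, hz, hyz⟩ i
    exact ⟨z i, hz i, hyz i⟩
  · intro h
    choose z hz hyz using h
    exact ⟨z, hz, hyz⟩

theorem setLAverage_le_mul_setLAverage {α : Type*} [MeasurableSpace α] {μ : Measure α}
    {s t : Set α} {c : ℝ≥0∞} (f : α → ℝ≥0∞) (hst : s ⊆ t) (hμ : μ t ≤ c * μ s)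
    (hc₀ : c ≠ 0) (hc : c ≠ ⊤) :
    ⨍⁻ x in s, f x ∂μ ≤ c * ⨍⁻ x in t, f x ∂μ := by
  rw [setLAverage_eq, setLAverage_eq, ← ENNReal.mul_div_mul_left _ _ hc₀ hc, mul_div_assoc]
  gcongr

theorem lpNormE_rpow {α : Type*} [MeasurableSpace α] (g : α → ℝ≥0∞) {p : ℝ} (hp : p ≠ 0)
    (μ : Measure α) : lpNormE g p μ ^ p = ∫⁻ x, g x ^ p ∂μ := by
  rw [lpNormE, one_div, ENNReal.rpow_inv_rpow hp]

theorem iInf_toReal_le_toReal_iInf {ι : Type*} [Finite ι] (f : ι → ℝ≥0∞) :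
    ⨅ i, (f i).toReal ≤ (⨅ i, f i).toReal := by
  cases isEmpty_or_nonempty ι
  · simp
  · obtain ⟨i, hi⟩ := exists_eq_ciInf_of_finite (f := f)
    rw [← hi]
    exact ciInf_le (finite_range _).bddBelow i

theorem toReal_inv_mul_mul_rpow_div_le {s W A K c : ℝ≥0∞} {p : ℝ} (h : A ^ p * W ≤ c * K)
    (hc : c ≠ ⊤) : s.toReal⁻¹ * W.toReal * A.toReal ^ p * (K / s).toReal⁻¹ ≤ c.toReal := by
  rw [ENNReal.toReal_div, inv_div]
  rcases eq_or_ne K.toReal 0 with hK | hK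
  · -- includes `K = ⊤`, where `toReal` gives the junk value `0`
    simp [hK]
  have hKtop : K ≠ ⊤ := fun h => hK (by simp [h])
  have h' : A.toReal ^ p * W.toReal ≤ c.toReal * K.toReal := by
    simpa only [ENNReal.toReal_mul, ENNReal.toReal_rpow] using
      ENNReal.toReal_mono (ENNReal.mul_ne_top hc hKtop) h
  have hs : s.toReal⁻¹ * s.toReal ≤ 1 := by
    rcases eq_or_ne s.toReal 0 with hs | hs
    · simp [hs]
    · rw [inv_mul_cancel₀ hs]
  calc s.toReal⁻¹ * W.toReal * A.toReal ^ p * (s.toReal / K.toReal)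
      = s.toReal⁻¹ * s.toReal * (A.toReal ^ p * W.toReal) / K.toReal := by ring
    _ ≤ 1 * (c.toReal * K.toReal) / K.toReal := by gcongr
    _ = c.toReal := by field_simp

theorem cube_eq_closedBall {n : ℕ} (c : Fin n → ℝ) {s : ℝ} (hs : 0 ≤ s) :
    cube c s = closedBall c (s / 2) := by
  ext y
  simp [cube, dist_pi_le_iff (by positivity : 0 ≤ s / 2), Real.dist_eq]

theorem measurableSet_cube {n : ℕ} (c : Fin n → ℝ) {s : ℝ} (hs : 0 ≤ s) :
    MeasurableSet (cube c s) :=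
  cube_eq_closedBall c hs ▸ measurableSet_closedBall

section Faces

variable {n k : ℕ} {δ r : ℝ}

def faceCenter (x : Fin n → ℝ) (r : ℝ) (F : FaceIdx n k) : Fin n → ℝ :=
  fun i => if i ∈ F.1.1 then x i else x i + if F.2 i then r else -r

def faceHalfWidth (r : ℝ) (F : FaceIdx n k) : Fin n → ℝ :=
  fun i => if i ∈ F.1.1 then r else 0

theorem faceHalfWidth_nonneg (hr : 0 ≤ r) (F : FaceIdx n k) (i : Fin n) :
    0 ≤ faceHalfWidth r F i := by
  unfold faceHalfWidth; split_ifs <;> simp [hr]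

theorem kFace_eq_pi (x : Fin n → ℝ) (r : ℝ) (F : FaceIdx n k) :
    kFace k x r F = univ.pi fun i => closedBall (faceCenter x r F i) (faceHalfWidth r F i) := by
  ext y
  simp only [kFace, mem_ofPred_eq, mem_univ_pi, faceCenter, faceHalfWidth]
  constructor
  · rintro ⟨hin, hout⟩ i
    by_cases hi : i ∈ F.1.1
    · simpa [hi, Real.dist_eq] using hin i hi
    · simp [hi, hout i hi]
  · intro h
    refine ⟨fun i hi => by simpa [hi, Real.dist_eq] using h i, fun i hi => ?_⟩
    simpa [hi] using h i

theorem faceNbhd_eq_pi (hδ : 0 ≤ δ) (hr : 0 ≤ r) (x : Fin n → ℝ) (F : FaceIdx n k) :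
    faceNbhd k δ x r F =
      univ.pi fun i => closedBall (faceCenter x r F i) (faceHalfWidth r F i + δ) := by
  rw [faceNbhd, kFace_eq_pi, cthickening_univ_pi hδ fun _ => isClosed_closedBall]
  simp only [cthickening_closedBall hδ (faceHalfWidth_nonneg hr F _), add_comm δ]

theorem volume_faceNbhd (hδ : 0 ≤ δ) (hr : 0 ≤ r) (x : Fin n → ℝ) (F : FaceIdx n k) :
    volume (faceNbhd k δ x r F) = ∏ i, ENNReal.ofReal (2 * (faceHalfWidth r F i + δ)) := by
  simp only [faceNbhd_eq_pi hδ hr, volume_pi_pi, Real.volume_closedBall]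

theorem volume_faceNbhd_four_mul_le (hδ : 0 ≤ δ) (hr : 0 ≤ r) (x z : Fin n → ℝ)
    (F : FaceIdx n k) :
    volume (faceNbhd k (4 * δ) z r F) ≤ 4 ^ n * volume (faceNbhd k δ x r F) := by
  have h4 : (4 : ℝ≥0∞) ^ n = ∏ _i : Fin n, 4 := by simp
  rw [volume_faceNbhd (by positivity) hr, volume_faceNbhd hδ hr, h4, ← Finset.prod_mul_distrib]
  refine Finset.prod_le_prod' fun i _ => ?_
  have hw := faceHalfWidth_nonneg hr F i
  rw [← ENNReal.ofReal_ofNat 4, ← ENNReal.ofReal_mul (by norm_num)]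
  exact ENNReal.ofReal_le_ofReal (by nlinarith)

theorem faceNbhd_subset_faceNbhd_four_mul (hδ : 0 ≤ δ) (hr : 0 ≤ r) {x z : Fin n → ℝ}
    (hz : z ∈ cube x δ) (F : FaceIdx n k) :
    faceNbhd k δ x r F ⊆ faceNbhd k (4 * δ) z r F := by
  rw [cube_eq_closedBall x hδ, mem_closedBall, dist_pi_le_iff (by positivity : 0 ≤ δ / 2)] at hz
  rw [faceNbhd_eq_pi hδ hr, faceNbhd_eq_pi (by positivity) hr]
  refine pi_mono fun i _ => closedBall_subset_closedBall' ?_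
  have hzx : dist (faceCenter x r F i) (faceCenter z r F i) ≤ δ / 2 := by
    rw [dist_comm]
    unfold faceCenter; split_ifs <;> simpa [Real.dist_eq] using hz i
  linarith

theorem measurableSet_skelNbhd (δ : ℝ) (x : Fin n → ℝ) (r : ℝ) :
    MeasurableSet (skelNbhd k δ x r) :=
  .iUnion fun _ => isClosed_cthickening.measurableSet

end Faces

section MaximalFunction

variable {n k : ℕ} {δ r : ℝ}

theorem skelMax_eq (f : (Fin n → ℝ) → ℝ) (x : Fin n → ℝ) :
    skelMax n k δ f x =
      ⨆ r ∈ Icc (1 : ℝ) 2, ⨅ F : FaceIdx n k, ⨍⁻ y in faceNbhd k δ x r F, ‖f y‖ₑ ∂volume := by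
  simp only [skelMax, setLAverage_eq, ENNReal.div_eq_inv_mul, enorm_eq_nnnorm]

theorem iInf_setLAverage_le_skelMax (hδ : 0 ≤ δ) (hr : r ∈ Icc (1 : ℝ) 2)
    (f : (Fin n → ℝ) → ℝ) {x z : Fin n → ℝ} (hz : z ∈ cube x δ) :
    ⨅ F : FaceIdx n k, ⨍⁻ y in faceNbhd k δ x r F, ‖f y‖ₑ ∂volume ≤
      4 ^ n * skelMax n k (4 * δ) f z := by
  have hr₀ : 0 ≤ r := by linarith [hr.1]
  calc ⨅ F : FaceIdx n k, ⨍⁻ y in faceNbhd k δ x r F, ‖f y‖ₑ ∂volume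
      ≤ ⨅ F : FaceIdx n k, 4 ^ n * ⨍⁻ y in faceNbhd k (4 * δ) z r F, ‖f y‖ₑ ∂volume :=
        iInf_mono fun F => setLAverage_le_mul_setLAverage _
          (faceNbhd_subset_faceNbhd_four_mul hδ hr₀ hz F)
          (volume_faceNbhd_four_mul_le hδ hr₀ x z F) (by simp) (by simp)
    _ = 4 ^ n * ⨅ F : FaceIdx n k, ⨍⁻ y in faceNbhd k (4 * δ) z r F, ‖f y‖ₑ ∂volume :=
        (ENNReal.mul_iInf_of_ne (by simp) (by simp)).symm
    _ ≤ 4 ^ n * skelMax n k (4 * δ) f z := by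
        rw [skelMax_eq]
        gcongr
        exact le_iSup₂_of_le r hr le_rfl

end MaximalFunction

theorem integral_eq_toReal_wMeasure {n : ℕ} {w : (Fin n → ℝ) → ℝ} (hw₀ : ∀ x, 0 ≤ w x)
    (hw : AEStronglyMeasurable w volume) {s : Set (Fin n → ℝ)} (hs : MeasurableSet s) :
    ∫ y in s, w y = (wMeasure w s).toReal := by
  rw [integral_eq_lintegral_of_nonneg_ae (.of_forall hw₀) hw.restrict, wMeasure,
    withDensity_apply _ hs]

theorem ravg_eq_toReal_setLAverage {n : ℕ} {g : (Fin n → ℝ) → ℝ} (hg₀ : ∀ x, 0 ≤ g x)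
    (hg : AEStronglyMeasurable g volume) (A : Set (Fin n → ℝ)) :
    ravg A g = (⨍⁻ y in A, ENNReal.ofReal (g y) ∂volume).toReal := by
  rw [ravg, setLAverage_eq, ENNReal.toReal_div,
    integral_eq_lintegral_of_nonneg_ae (.of_forall hg₀) hg.restrict, div_eq_inv_mul]

def dualWeight {α : Type*} (w : α → ℝ) (p : ℝ) : α → ℝ :=
  fun y => w y ^ (-(p / (p - 1)) / p)

section DualWeight

variable {α : Type*} {w : α → ℝ} {p : ℝ}

theorem dualWeight_nonneg (hw₀ : ∀ x, 0 ≤ w x) (x : α) : 0 ≤ dualWeight w p x :=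
  Real.rpow_nonneg (hw₀ x) _

theorem mul_dualWeight_rpow (hp : 1 < p) {x : α} (hw₀ : 0 ≤ w x) :
    w x * dualWeight w p x ^ p = dualWeight w p x := by
  set c := -(p / (p - 1)) / p
  have hc : 1 + c * p = c := by
    have : p - 1 ≠ 0 := by linarith
    simp only [c]
    field_simp
    ring
  have hc₀ : c ≠ 0 :=
    div_ne_zero (neg_ne_zero.2 (div_pos (by linarith) (by linarith)).ne') (by linarith)
  unfold dualWeight
  rw [← Real.rpow_mul hw₀, ← Real.rpow_one_add' hw₀ (hc ▸ hc₀), hc]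

end DualWeight

theorem eLpNorm_indicator_dualWeight_rpow {n : ℕ} {w : (Fin n → ℝ) → ℝ} {p : ℝ} (hp : 1 < p)
    (hw₀ : ∀ x, 0 ≤ w x) (hw : AEMeasurable w volume) {S : Set (Fin n → ℝ)}
    (hS : MeasurableSet S) :
    eLpNorm (S.indicator (dualWeight w p)) (ENNReal.ofReal p) (wMeasure w) ^ p =
      ∫⁻ y in S, ENNReal.ofReal (dualWeight w p y) := by
  have hp₀ : 0 < p := by linarith
  rw [eLpNorm_eq_lintegral_rpow_enorm_toReal (by simpa using hp₀) (by simp),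
    ENNReal.toReal_ofReal hp₀.le, one_div, ENNReal.rpow_inv_rpow hp₀.ne', wMeasure,
    lintegral_withDensity_eq_lintegral_mul_non_measurable₀ _ hw.ennreal_ofReal (by simp),
    ← lintegral_indicator hS]
  refine lintegral_congr fun y => ?_
  by_cases hy : y ∈ S
  · rw [Pi.mul_apply, indicator_of_mem hy, indicator_of_mem hy,
      Real.enorm_eq_ofReal (dualWeight_nonneg hw₀ y),
      ENNReal.ofReal_rpow_of_nonneg (dualWeight_nonneg hw₀ y) hp₀.le,
      ← ENNReal.ofReal_mul (hw₀ y), mul_dualWeight_rpow hp (hw₀ y)]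
  · simp [indicator_of_notMem hy, hp₀]

theorem iInf_setLAverage_dualWeight_rpow_mul_le {n k : ℕ} {δ p C r : ℝ} (hδ : 0 ≤ δ)
    (hp : 1 < p) {w : (Fin n → ℝ) → ℝ} (hw₀ : ∀ x, 0 ≤ w x) (hw : AEMeasurable w volume)
    (hbdd : ∀ f : (Fin n → ℝ) → ℝ,
      lpNormE (skelMax n k (4 * δ) f) p (wMeasure w) ≤
        ENNReal.ofReal C * eLpNorm f (ENNReal.ofReal p) (wMeasure w))
    (hr : r ∈ Icc (1 : ℝ) 2) (x : Fin n → ℝ) :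
    (⨅ F : FaceIdx n k, ⨍⁻ y in faceNbhd k δ x r F, ENNReal.ofReal (dualWeight w p y) ∂volume)
        ^ p * wMeasure w (cube x δ) ≤
      (4 ^ n * ENNReal.ofReal C) ^ p *
        ∫⁻ y in skelNbhd k δ x r, ENNReal.ofReal (dualWeight w p y) := by
  have hp₀ : 0 < p := by linarith
  set S := skelNbhd k δ x r
  set f := S.indicator (dualWeight w p)
  set A := ⨅ F : FaceIdx n k,
    ⨍⁻ y in faceNbhd k δ x r F, ENNReal.ofReal (dualWeight w p y) ∂volume
  have hA : A = ⨅ F : FaceIdx n k, ⨍⁻ y in faceNbhd k δ x r F, ‖f y‖ₑ ∂volume :=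
    iInf_congr fun F => setLAverage_congr_fun isClosed_cthickening.measurableSet fun y hy => by
      rw [show f y = dualWeight w p y from indicator_of_mem (mem_iUnion_of_mem F hy) _,
        Real.enorm_eq_ofReal (dualWeight_nonneg hw₀ y)]
  calc A ^ p * wMeasure w (cube x δ)
      = ∫⁻ _ in cube x δ, A ^ p ∂wMeasure w := (setLIntegral_const _ _).symm
    _ ≤ ∫⁻ z in cube x δ, (4 ^ n * skelMax n k (4 * δ) f z) ^ p ∂wMeasure w :=
        setLIntegral_mono' (measurableSet_cube x hδ) fun z hz =>
          ENNReal.rpow_le_rpow (hA ▸ iInf_setLAverage_le_skelMax hδ hr f hz) hp₀.le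
    _ ≤ ∫⁻ z, (4 ^ n * skelMax n k (4 * δ) f z) ^ p ∂wMeasure w := setLIntegral_le_lintegral _ _
    _ = (4 ^ n) ^ p * lpNormE (skelMax n k (4 * δ) f) p (wMeasure w) ^ p := by
        simp only [lpNormE_rpow _ hp₀.ne', ENNReal.mul_rpow_of_nonneg _ _ hp₀.le]
        exact lintegral_const_mul' _ _ (by simp)
    _ ≤ (4 ^ n) ^ p * (ENNReal.ofReal C * eLpNorm f (ENNReal.ofReal p) (wMeasure w)) ^ p := by
        gcongr
        exact hbdd f
    _ = (4 ^ n * ENNReal.ofReal C) ^ p * ∫⁻ y in S, ENNReal.ofReal (dualWeight w p y) := by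
        rw [ENNReal.mul_rpow_of_nonneg _ _ hp₀.le, ENNReal.mul_rpow_of_nonneg _ _ hp₀.le,
          eLpNorm_indicator_dualWeight_rpow hp hw₀ hw (measurableSet_skelNbhd δ x r), mul_assoc]

theorem necessary_condition_k_general (n k : ℕ) (δ p : ℝ)
    (hδ : δ ∈ Set.Ioo (0 : ℝ) 1) (hp : 1 < p)
    (w : (Fin n → ℝ) → ℝ) (hw0 : ∀ x, 0 ≤ w x) (hw : LocallyIntegrable w volume)
    (C : ℝ)
    (hbdd : ∀ f : (Fin n → ℝ) → ℝ,
      lpNormE (skelMax n k (4 * δ) f) p (wMeasure w) ≤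
        ENNReal.ofReal C * eLpNorm f (ENNReal.ofReal p) (wMeasure w)) :
    ∃ B : ℝ, ∀ (x : Fin n → ℝ) (r : ℝ), r ∈ Set.Icc (1 : ℝ) 2 →
      ((volume (skelNbhd k δ x r)).toReal⁻¹ * ∫ y in cube x δ, w y) *
          (⨅ F : FaceIdx n k,
            ravg (faceNbhd k δ x r F) fun y => w y ^ (-(p / (p - 1)) / p)) ^ p *
          (ravg (skelNbhd k δ x r) fun y => w y ^ (-(p / (p - 1)) / p))⁻¹ ≤ B := by
  have hδ₀ : 0 ≤ δ := hδ.1.le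
  have hwm : AEMeasurable w volume := hw.aestronglyMeasurable.aemeasurable
  have hσ : AEStronglyMeasurable (dualWeight w p) volume :=
    (hwm.pow_const _).aestronglyMeasurable
  refine ⟨((4 ^ n * ENNReal.ofReal C) ^ p).toReal, fun x r hr => ?_⟩
  change _ * (⨅ F : FaceIdx n k, ravg _ (dualWeight w p)) ^ p * (ravg _ (dualWeight w p))⁻¹ ≤ _
  simp only [integral_eq_toReal_wMeasure hw0 hw.aestronglyMeasurable (measurableSet_cube x hδ₀),
    ravg_eq_toReal_setLAverage (dualWeight_nonneg hw0) hσ, setLAverage_eq (s := skelNbhd k δ x r)]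
  calc _ ≤ _ := by
        gcongr
        · exact Real.iInf_nonneg fun _ => ENNReal.toReal_nonneg
        · exact iInf_toReal_le_toReal_iInf _
    _ ≤ _ := toReal_inv_mul_mul_rpow_div_le
        (iInf_setLAverage_dualWeight_rpow_mul_le hδ₀ hp hw0 hwm hbdd hr x) (by finiteness)

/-- if the `k`-skeleton maximal operator `M^k_{4δ}` is bounded on
`L^p(w)` in `ℝⁿ`, then `w` satisfies the `𝒜^{S_k}_p` condition at scale `δ`. -/
theorem necessary_condition_k (n k : ℕ) (hkn : k < n) (δ p : ℝ)
    (hδ : δ ∈ Set.Ioo (0 : ℝ) 1) (hp : 1 < p)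
    (w : (Fin n → ℝ) → ℝ) (hw0 : ∀ x, 0 ≤ w x) (hw : LocallyIntegrable w volume)
    (C : ℝ)
    (hbdd : ∀ f : (Fin n → ℝ) → ℝ,
      lpNormE (skelMax n k (4 * δ) f) p (wMeasure w) ≤
        ENNReal.ofReal C * eLpNorm f (ENNReal.ofReal p) (wMeasure w)) :
    ∃ B : ℝ, ∀ (x : Fin n → ℝ) (r : ℝ), r ∈ Set.Icc (1 : ℝ) 2 →
      ((volume (skelNbhd k δ x r)).toReal⁻¹ * ∫ y in cube x δ, w y) *
          (⨅ F : FaceIdx n k,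
            ravg (faceNbhd k δ x r F) fun y => w y ^ (-(p / (p - 1)) / p)) ^ p *
          (ravg (skelNbhd k δ x r) fun y => w y ^ (-(p / (p - 1)) / p))⁻¹ ≤ B :=
  necessary_condition_k_general n k δ p hδ hp w hw0 hw C hbdd

end
end
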